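/- Conditional variance bound for the smoothing error of the score: under Assumption 1, define ξ̃_{i,k+1}(τ) = F_i(Y_{i,k}(τ)) − 1{X_{i,k+1} ≤ Y_{i,k}(τ)}. Then for every 1 ≤ i ≤ p, every τ ∈ [τ0, τ1] and every k ≥ 1, almost surely E[ (ξ̃_{i,k+1}(τ) − ξ_{i,k+1}(τ))² | F_{i,k} ] ≤ 4 c_f a γ_k. -/

import Mathlib

/-!
Write `h = a γ_k`, `U = 1{X_{k+1} ≤ Y_k}` and `G = g_h(Y_k - X_{k+1})`. Since `Y_k` is
`F_k`-measurable and `X_{k+1}` is independent of `F_k`, the conditional expectation of any bounded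
function of `(Y_k, X_{k+1})` is obtained by integrating out `X_{k+1}` against its law with `Y_k`
frozen; in particular `E[U | F_k] = F_i(Y_k)`. Hence `ξ̃ - ξ = E[V | F_k] - V` for `V = U - G`,
so the quantity to bound is the conditional variance of `V`, which is at most `E[V² | F_k]`.
Finally `V² ≤ 1{|X_{k+1} - Y_k| ≤ h}`, whose conditional expectation is the mass the law of
`X_{k+1}` gives to an interval of length `2h`, at most `2 c_f h` by the density bound.
-/

open MeasureTheory ProbabilityTheory Real

/-- The piecewise-linear smoothing of the indicator function. -/
noncomputable def gfun (x : ℝ) : ℝ :=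
  if 1 ≤ x then 1 else if -1 ≤ x then (x + 1) / 2 else 0

/-- Rescaled smoothing function `g_h(x) = g(x/h)`. -/
noncomputable def gsm (h x : ℝ) : ℝ := gfun (x / h)

/-- Learning rate `γ_k = c_γ k^{-β}`. -/
noncomputable def gam (cγ β : ℝ) (k : ℕ) : ℝ := cγ * (k : ℝ) ^ (-β)

/-- The σ-field generated by `X_1, …, X_k`. -/
def sigmaUpTo {Ω : Type} (X : ℕ → Ω → ℝ) (k : ℕ) : MeasurableSpace Ω :=
  ⨆ j ∈ Finset.Icc 1 k, MeasurableSpace.comap (X j) inferInstance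

section Freezing

variable {Ω α β : Type*} {m m₀ : MeasurableSpace Ω} {μ : Measure[m₀] Ω} [IsFiniteMeasure μ]
  [MeasurableSpace α] [MeasurableSpace β] {X : Ω → β}

theorem IndepFun.integral_comp_prodMk_eq_integral_integral_map {T : Ω → α}
    (hT : Measurable T) (hX : Measurable X) (hind : IndepFun T X μ) {ψ : α × β → ℝ}
    (hψ : Measurable ψ) (hint : Integrable (fun ω => ψ (T ω, X ω)) μ) :
    ∫ ω, ψ (T ω, X ω) ∂μ = ∫ ω, ∫ x, ψ (T ω, x) ∂(μ.map X) ∂μ := by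
  have hmap : μ.map (fun ω => (T ω, X ω)) = (μ.map T).prod (μ.map X) :=
    (indepFun_iff_map_prod_eq_prod_map_map hT.aemeasurable hX.aemeasurable).mp hind
  replace hint : Integrable ψ ((μ.map T).prod (μ.map X)) := by
    rwa [← hmap, integrable_map_measure hψ.aestronglyMeasurable (hT.prodMk hX).aemeasurable]
  calc ∫ ω, ψ (T ω, X ω) ∂μ = ∫ z, ψ z ∂((μ.map T).prod (μ.map X)) := by
        rw [← hmap, integral_map (hT.prodMk hX).aemeasurable hψ.aestronglyMeasurable]
    _ = ∫ t, ∫ x, ψ (t, x) ∂(μ.map X) ∂(μ.map T) := integral_prod ψ hint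
    _ = ∫ ω, ∫ x, ψ (T ω, x) ∂(μ.map X) ∂μ :=
        integral_map hT.aemeasurable hψ.stronglyMeasurable.integral_prod_right'.aestronglyMeasurable

theorem condExp_comp_prodMk_ae_eq_integral_map (hm : m ≤ m₀) {Y : Ω → α}
    (hY : Measurable[m] Y) (hX : Measurable X)
    (hind : Indep m (MeasurableSpace.comap X inferInstance) μ) {ψ : α × β → ℝ}
    (hψ : Measurable ψ) {C : ℝ} (hψC : ∀ z, ‖ψ z‖ ≤ C) :
    μ[fun ω => ψ (Y ω, X ω) | m] =ᵐ[μ] fun ω => ∫ x, ψ (Y ω, x) ∂(μ.map X) := by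
  have hY₀ : Measurable Y := hY.mono hm le_rfl
  have hψYX : Integrable (fun ω => ψ (Y ω, X ω)) μ :=
    .of_bound (hψ.comp (hY₀.prodMk hX)).aestronglyMeasurable C (.of_forall fun ω => hψC _)
  have hΨ : StronglyMeasurable fun y => ∫ x, ψ (y, x) ∂(μ.map X) :=
    hψ.stronglyMeasurable.integral_prod_right'
  have hΨY : Integrable (fun ω => ∫ x, ψ (Y ω, x) ∂(μ.map X)) μ := by
    refine .of_bound (hΨ.comp_measurable hY₀).aestronglyMeasurable (C * (μ.map X).real Set.univ)
      (.of_forall fun ω => ?_)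
    simpa [mul_comm] using norm_integral_le_of_norm_le_const (.of_forall fun x => hψC (Y ω, x))
  refine (ae_eq_condExp_of_forall_setIntegral_eq hm hψYX (fun s _ _ => hΨY.integrableOn)
    (fun s hs _ => ?_) (hΨ.comp_measurable hY).aestronglyMeasurable).symm
  have setIntegral_eq (g : Ω → ℝ) : ∫ ω in s, g ω ∂μ = ∫ ω, s.indicator 1 ω * g ω ∂μ := by
    rw [← integral_indicator (hm s hs)]
    congr 1 with ω
    by_cases hω : ω ∈ s <;> simp [hω]
  -- the set integral is the integral of a function of `((Y, 1_s), X)`, an independent pair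
  have hT : Measurable[m] fun ω => (Y ω, s.indicator (1 : Ω → ℝ) ω) :=
    hY.prodMk (measurable_const.indicator hs)
  have key := IndepFun.integral_comp_prodMk_eq_integral_integral_map (hT.mono hm le_rfl) hX
    (indep_of_indep_of_le_left hind hT.comap_le) (ψ := fun z => z.1.2 * ψ (z.1.1, z.2))
    (measurable_fst.snd.mul (hψ.comp (measurable_fst.fst.prodMk measurable_snd)))
    (hψYX.bdd_mul (c := 1) (measurable_const.indicator (hm s hs)).aestronglyMeasurable
      (.of_forall fun ω => (norm_indicator_le_norm_self _ _).trans (by simp)))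
  simp only [setIntegral_eq, ← integral_const_mul]
  exact key.symm

end Freezing

@[fun_prop]
lemma measurable_gfun : Measurable gfun :=
  Measurable.ite measurableSet_Ici measurable_const <|
    Measurable.ite measurableSet_Ici (by fun_prop) measurable_const

@[fun_prop]
lemma measurable_gsm (h : ℝ) : Measurable (gsm h) := by
  unfold gsm; fun_prop

lemma gsm_mem_Icc (h x : ℝ) : gsm h x ∈ Set.Icc 0 1 := by
  unfold gsm gfun
  split_ifs <;> constructor <;> linarith

noncomputable def smoothingGap (h y x : ℝ) : ℝ := (if x ≤ y then 1 else 0) - gsm h (y - x)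

lemma measurable_smoothingGap (h : ℝ) : Measurable fun z : ℝ × ℝ => smoothingGap h z.1 z.2 :=
  (Measurable.ite (measurableSet_le measurable_snd measurable_fst) measurable_const
    measurable_const).sub (by fun_prop)

lemma abs_smoothingGap_le_one (h y x : ℝ) : |smoothingGap h y x| ≤ 1 := by
  obtain ⟨h₀, h₁⟩ := gsm_mem_Icc h (y - x)
  unfold smoothingGap
  split_ifs <;> rw [abs_le] <;> constructor <;> linarith

lemma smoothingGap_eq_zero_of_notMem {h y x : ℝ} (hh : 0 < h)
    (hx : x ∉ Set.Icc (y - h) (y + h)) : smoothingGap h y x = 0 := by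
  unfold smoothingGap gsm gfun
  rw [Set.mem_Icc, not_and_or, not_le, not_le] at hx
  rcases hx with hx | hx
  · have : 1 ≤ (y - x) / h := by rw [le_div_iff₀ hh]; linarith
    rw [if_pos (by linarith), if_pos this, sub_self]
  · have : ¬ -1 ≤ (y - x) / h := by rw [le_div_iff₀ hh]; linarith
    rw [if_neg (by linarith), if_neg (by linarith), if_neg this, sub_self]

lemma sq_smoothingGap_le_indicator {h : ℝ} (hh : 0 < h) (y x : ℝ) :
    smoothingGap h y x ^ 2 ≤ (Set.Icc (y - h) (y + h)).indicator 1 x := by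
  by_cases hx : x ∈ Set.Icc (y - h) (y + h)
  · rw [Set.indicator_of_mem hx, Pi.one_apply, sq_le_one_iff_abs_le_one]
    exact abs_smoothingGap_le_one h y x
  · rw [Set.indicator_of_notMem hx, smoothingGap_eq_zero_of_notMem hh hx]
    norm_num

lemma integral_sq_smoothingGap_le {ν : Measure ℝ} [IsFiniteMeasure ν] {h : ℝ} (hh : 0 < h)
    (y : ℝ) : ∫ x, smoothingGap h y x ^ 2 ∂ν ≤ ν.real (Set.Icc (y - h) (y + h)) := by
  rw [← integral_indicator_one measurableSet_Icc]
  refine integral_mono ?_ ((integrable_const 1).indicator measurableSet_Icc)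
    (sq_smoothingGap_le_indicator hh y)
  refine .of_bound (((measurable_smoothingGap h).comp measurable_prodMk_left).pow_const 2
    |>.aestronglyMeasurable) 1 (.of_forall fun x => ?_)
  rw [norm_pow, Real.norm_eq_abs, sq_le_one_iff_abs_le_one, abs_abs]
  exact abs_smoothingGap_le_one h y x

lemma measureReal_Icc_le_of_density_le {f : ℝ → ℝ} {c : ℝ} (hc : 0 ≤ c) (hf : ∀ x, f x ≤ c)
    {a b : ℝ} (hab : a ≤ b) :
    (volume.withDensity fun x => ENNReal.ofReal (f x)).real (Set.Icc a b) ≤ c * (b - a) := by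
  refine ENNReal.toReal_le_of_le_ofReal (by nlinarith) ?_
  calc (volume.withDensity fun x => ENNReal.ofReal (f x)) (Set.Icc a b)
      ≤ ∫⁻ _ in Set.Icc a b, ENNReal.ofReal c := by
        rw [withDensity_apply _ measurableSet_Icc]
        exact lintegral_mono fun x => ENNReal.ofReal_le_ofReal (hf x)
    _ = ENNReal.ofReal (c * (b - a)) := by
        rw [setLIntegral_const, Real.volume_Icc, ENNReal.ofReal_mul hc]

section NaturalFiltration

variable {Ω : Type} {X : ℕ → Ω → ℝ}

lemma measurable_sigmaUpTo {j k : ℕ} (h1 : 1 ≤ j) (h2 : j ≤ k) :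
    Measurable[sigmaUpTo X k] (X j) :=
  measurable_iff_comap_le.mpr <| le_iSup₂ (f := fun j (_ : j ∈ Finset.Icc 1 k) =>
    MeasurableSpace.comap (X j) inferInstance) j (Finset.mem_Icc.mpr ⟨h1, h2⟩)

lemma sigmaUpTo_mono : Monotone (sigmaUpTo X) := fun _ _ hkl =>
  biSup_mono fun _ hj => by
    rw [Finset.mem_Icc] at hj ⊢
    exact ⟨hj.1, hj.2.trans hkl⟩

lemma sigmaUpTo_le {m₀ : MeasurableSpace Ω} (hX : ∀ j, Measurable (X j)) (k : ℕ) :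
    sigmaUpTo X k ≤ m₀ :=
  iSup₂_le fun j _ => (hX j).comap_le

lemma indep_sigmaUpTo_comap_succ [MeasurableSpace Ω] {μ : Measure Ω} (hX : ∀ j, Measurable (X j))
    (hind : iIndepFun X μ) (k : ℕ) :
    Indep (sigmaUpTo X k) (MeasurableSpace.comap (X (k + 1)) inferInstance) μ :=
  indep_of_indep_of_le_right (indep_biSup_compl (fun j => (hX j).comap_le) hind _)
    (le_iSup₂ (f := fun j (_ : j ∈ (Finset.Icc 1 k : Set ℕ)ᶜ) =>
      MeasurableSpace.comap (X j) inferInstance) (k + 1) (by simp))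

lemma measurable_sigmaUpTo_of_recursion {Y : ℕ → Ω → ℝ} {φ : ℕ → ℝ → ℝ → ℝ}
    (hφ : ∀ n, Measurable fun z : ℝ × ℝ => φ n z.1 z.2) (h1 : Measurable[sigmaUpTo X 1] (Y 1))
    (hrec : ∀ n, 1 ≤ n → ∀ ω, Y (n + 1) ω = φ n (Y n ω) (X (n + 1) ω)) {k : ℕ} (hk : 1 ≤ k) :
    Measurable[sigmaUpTo X k] (Y k) := by
  induction k, hk using Nat.le_induction with
  | base => exact h1
  | succ n hn ih =>
    rw [funext (hrec n hn)]
    exact (hφ n).comp ((ih.mono (sigmaUpTo_mono n.le_succ) le_rfl).prodMk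
      (measurable_sigmaUpTo (by omega) le_rfl))

end NaturalFiltration

section SmoothingError

variable {Ω : Type*} {m m₀ : MeasurableSpace Ω} {μ : Measure[m₀] Ω} [IsFiniteMeasure μ]
  {Y X : Ω → ℝ}

lemma condExp_sq_sub_sub_ae_eq_condVar (hm : m ≤ m₀) {U G W : Ω → ℝ} (c : ℝ)
    (hU : Integrable U μ) (hG : Integrable G μ) (hW : W =ᵐ[μ] μ[U | m]) :
    μ[fun ω => ((W ω - U ω) - ((c - G ω) - μ[fun ω' => c - G ω' | m] ω)) ^ 2 | m]
      =ᵐ[μ] Var[U - G; μ | m] := by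
  refine condExp_congr_ae ?_
  have hcG : μ[fun ω => c - G ω | m] =ᵐ[μ] fun ω => c - μ[G | m] ω := by
    have h := condExp_sub (integrable_const c) hG m
    rwa [condExp_const hm] at h
  filter_upwards [hW, hcG, condExp_sub hU hG m] with ω hWω hcGω hUGω
  simp only [Pi.pow_apply, Pi.sub_apply] at hUGω ⊢
  rw [hWω, hcGω, hUGω]
  ring

lemma condExp_ite_le_ae_eq_measureReal_Iic (hm : m ≤ m₀) (hY : Measurable[m] Y)
    (hX : Measurable X) (hind : Indep m (MeasurableSpace.comap X inferInstance) μ) :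
    μ[fun ω => if X ω ≤ Y ω then (1 : ℝ) else 0 | m]
      =ᵐ[μ] fun ω => (μ.map X).real (Set.Iic (Y ω)) := by
  refine (condExp_comp_prodMk_ae_eq_integral_map hm hY hX hind
    (ψ := fun z => if z.2 ≤ z.1 then (1 : ℝ) else 0)
    (Measurable.ite (measurableSet_le measurable_snd measurable_fst) measurable_const
      measurable_const) (C := 1) fun z => by split_ifs <;> simp).trans (.of_forall fun ω => ?_)
  dsimp only
  rw [← integral_indicator_one measurableSet_Iic]
  rfl

lemma condExp_sq_smoothingGap_le (hm : m ≤ m₀) (hY : Measurable[m] Y) (hX : Measurable X)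
    (hind : Indep m (MeasurableSpace.comap X inferInstance) μ) {h : ℝ} (hh : 0 < h) :
    μ[fun ω => smoothingGap h (Y ω) (X ω) ^ 2 | m]
      ≤ᵐ[μ] fun ω => (μ.map X).real (Set.Icc (Y ω - h) (Y ω + h)) := by
  filter_upwards [condExp_comp_prodMk_ae_eq_integral_map hm hY hX hind
    (measurable_smoothingGap h |>.pow_const 2) (C := 1) fun z => by
      rw [norm_pow, Real.norm_eq_abs, sq_le_one_iff_abs_le_one, abs_abs]
      exact abs_smoothingGap_le_one h z.1 z.2] with ω hω
  exact hω.trans_le (integral_sq_smoothingGap_le hh _)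

theorem condExp_sq_smoothing_error_le (hm : m ≤ m₀) (hY : Measurable[m] Y) (hX : Measurable X)
    (hind : Indep m (MeasurableSpace.comap X inferInstance) μ) {h : ℝ} (hh : 0 < h) (c : ℝ) :
    ∀ᵐ ω ∂μ,
      μ[fun ω' => (((μ.map X).real (Set.Iic (Y ω')) - (if X ω' ≤ Y ω' then (1 : ℝ) else 0)) -
          ((c - gsm h (Y ω' - X ω')) - μ[fun ω'' => c - gsm h (Y ω'' - X ω'') | m] ω')) ^ 2 | m] ω
        ≤ (μ.map X).real (Set.Icc (Y ω - h) (Y ω + h)) := by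
  have hY₀ : Measurable Y := hY.mono hm le_rfl
  have hU : Integrable (fun ω => if X ω ≤ Y ω then (1 : ℝ) else 0) μ :=
    .of_bound (Measurable.ite (measurableSet_le hX hY₀) measurable_const
      measurable_const).aestronglyMeasurable 1 (.of_forall fun ω => by split_ifs <;> simp)
  have hG : Integrable (fun ω => gsm h (Y ω - X ω)) μ :=
    .of_bound ((measurable_gsm h).comp (hY₀.sub hX)).aestronglyMeasurable 1 (.of_forall fun ω => by
      obtain ⟨h₀, h₁⟩ := gsm_mem_Icc h (Y ω - X ω)
      rwa [Real.norm_eq_abs, abs_of_nonneg h₀])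
  have hV : MemLp (fun ω => smoothingGap h (Y ω) (X ω)) 2 μ :=
    .of_bound ((measurable_smoothingGap h).comp (hY₀.prodMk hX)).aestronglyMeasurable 1
      (.of_forall fun ω => abs_smoothingGap_le_one _ _ _)
  filter_upwards [condExp_sq_sub_sub_ae_eq_condVar hm c hU hG
      (condExp_ite_le_ae_eq_measureReal_Iic hm hY hX hind).symm,
    condVar_ae_le_condExp_sq hm hV, condExp_sq_smoothingGap_le hm hY hX hind hh]
    with ω hω hVω hV2ω
  exact hω.trans_le (hVω.trans hV2ω)

end SmoothingError

theorem smoothed_sgd_conditional_variance_bound_general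
    (cγ β a cf : ℝ)
    (hcγ : 0 < cγ) (ha : 1 / 2 < a) (hcf : 0 < cf)
    (Ω : Type) [MeasurableSpace Ω] (μ : Measure Ω) [IsProbabilityMeasure μ]
    (X : ℕ → ℕ → Ω → ℝ) (F f : ℕ → ℝ → ℝ) (y : ℕ → ℝ) (Y : ℕ → ℕ → ℝ → Ω → ℝ)
    (hXmeas : ∀ i k, Measurable (X i k))
    -- the X_{i,k}, k ≥ 1, are independent and identically distributed
    (hindep : ∀ i, iIndepFun (fun k => X i k) μ)
    (hident : ∀ i k, 1 ≤ k → Measure.map (X i k) μ = Measure.map (X i 1) μ)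
    -- F_i is the cdf of X_{i,1}
    (hcdf : ∀ i x, F i x = (μ {ω | X i 1 ω ≤ x}).toReal)
    -- X_{i,1} has density f_i bounded by c_f
    (hdens : ∀ i, Measure.map (X i 1) μ =
      MeasureTheory.volume.withDensity (fun x => ENNReal.ofReal (f i x)))
    (hfbd : ∀ i x, |f i x| ≤ cf)
    -- SGD iterates with deterministic initial value
    (hY1 : ∀ i τ ω, Y i 1 τ ω = y i)
    (hYrec : ∀ i k τ ω, 1 ≤ k → Y i (k + 1) τ ω =
      Y i k τ ω + gam cγ β k * (τ - gsm (a * gam cγ β k) (Y i k τ ω - X i (k + 1) ω)))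
    (i k : ℕ) (hk : 1 ≤ k)
    (τ : ℝ) :
    ∀ᵐ ω ∂μ,
      (μ[fun ω' =>
          ((F i (Y i k τ ω') - (if X i (k + 1) ω' ≤ Y i k τ ω' then (1 : ℝ) else 0)) -
            ((τ - gsm (a * gam cγ β k) (Y i k τ ω' - X i (k + 1) ω')) -
              (μ[fun ω'' => τ - gsm (a * gam cγ β k) (Y i k τ ω'' - X i (k + 1) ω'') |
                  sigmaUpTo (X i) k]) ω')) ^ 2 |
          sigmaUpTo (X i) k]) ω ≤ 4 * cf * a * gam cγ β k := by
  set h := a * gam cγ β k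
  have hh : 0 < h := mul_pos (by linarith) (mul_pos hcγ (by positivity))
  have hY : Measurable[sigmaUpTo (X i) k] (Y i k τ) :=
    measurable_sigmaUpTo_of_recursion (Y := fun n => Y i n τ)
      (φ := fun n y x => y + gam cγ β n * (τ - gsm (a * gam cγ β n) (y - x))) (by fun_prop)
      (by rw [funext (hY1 i τ)]; exact measurable_const) (fun n hn ω => hYrec i n τ ω hn) hk
  have hlaw : μ.map (X i (k + 1)) = μ.map (X i 1) := hident i (k + 1) k.succ_pos
  have hF : ∀ x, F i x = (μ.map (X i (k + 1))).real (Set.Iic x) := fun x => by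
    rw [hlaw, measureReal_def, Measure.map_apply (hXmeas i 1) measurableSet_Iic, hcdf]
    rfl
  simp only [hF]
  filter_upwards [condExp_sq_smoothing_error_le (sigmaUpTo_le (hXmeas i) k) hY (hXmeas i (k + 1))
    (indep_sigmaUpTo_comap_succ (hXmeas i) (hindep i) k) hh τ] with ω hω
  calc _ ≤ _ := hω
    _ ≤ cf * ((Y i k τ ω + h) - (Y i k τ ω - h)) := by
        rw [hlaw, hdens i]
        exact measureReal_Icc_le_of_density_le hcf.le (fun x => (le_abs_self _).trans (hfbd i x))
          (by linarith)
    _ ≤ 4 * cf * a * gam cγ β k := by nlinarith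

/-- **Conditional variance bound for the smoothing error of the score**: with
`ξ̃_{i,k+1}(τ) = F_i(Y_{i,k}(τ)) − 1{X_{i,k+1} ≤ Y_{i,k}(τ)}` and
`ξ_{i,k+1}(τ) = Z_{i,k+1}(τ) − E(Z_{i,k+1}(τ) | F_{i,k})`,
`Z_{i,k+1}(τ) = τ − g_{aγ_k}(Y_{i,k}(τ) − X_{i,k+1})`, for every `1 ≤ i ≤ p`,
`τ ∈ [τ0, τ1]` and `k ≥ 1`, almost surely
`E[ (ξ̃_{i,k+1}(τ) − ξ_{i,k+1}(τ))² | F_{i,k} ] ≤ 4 c_f a γ_k`. -/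
theorem smoothed_sgd_conditional_variance_bound
    (τ0 τ1 cγ β a cf : ℝ)
    (hτ0 : 0 < τ0) (hτ01 : τ0 < τ1) (hτ1 : τ1 < 1)
    (hcγ : 0 < cγ) (hβ1 : 1 / 2 < β) (hβ2 : β < 1) (ha : 1 / 2 < a) (hcf : 0 < cf)
    (p : ℕ) (Ω : Type) [MeasurableSpace Ω] (μ : Measure Ω) [IsProbabilityMeasure μ]
    (X : ℕ → ℕ → Ω → ℝ) (F f : ℕ → ℝ → ℝ) (y : ℕ → ℝ) (Y : ℕ → ℕ → ℝ → Ω → ℝ)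
    (hXmeas : ∀ i k, Measurable (X i k))
    -- the X_{i,k}, k ≥ 1, are independent and identically distributed
    (hindep : ∀ i, iIndepFun (fun k => X i k) μ)
    (hident : ∀ i k, 1 ≤ k → Measure.map (X i k) μ = Measure.map (X i 1) μ)
    -- F_i is the cdf of X_{i,1}
    (hcdf : ∀ i x, F i x = (μ {ω | X i 1 ω ≤ x}).toReal)
    -- X_{i,1} has density f_i bounded by c_f
    (hdens : ∀ i, Measure.map (X i 1) μ =
      MeasureTheory.volume.withDensity (fun x => ENNReal.ofReal (f i x)))
    (hfbd : ∀ i x, |f i x| ≤ cf)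
    -- SGD iterates with deterministic initial value
    (hY1 : ∀ i τ ω, Y i 1 τ ω = y i)
    (hYrec : ∀ i k τ ω, 1 ≤ k → Y i (k + 1) τ ω =
      Y i k τ ω + gam cγ β k * (τ - gsm (a * gam cγ β k) (Y i k τ ω - X i (k + 1) ω)))
    (i k : ℕ) (hi1 : 1 ≤ i) (hip : i ≤ p) (hk : 1 ≤ k)
    (τ : ℝ) (hτl : τ0 ≤ τ) (hτu : τ ≤ τ1) :
    ∀ᵐ ω ∂μ,
      (μ[fun ω' =>
          ((F i (Y i k τ ω') - (if X i (k + 1) ω' ≤ Y i k τ ω' then (1 : ℝ) else 0)) -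
            ((τ - gsm (a * gam cγ β k) (Y i k τ ω' - X i (k + 1) ω')) -
              (μ[fun ω'' => τ - gsm (a * gam cγ β k) (Y i k τ ω'' - X i (k + 1) ω'') |
                  sigmaUpTo (X i) k]) ω')) ^ 2 |
          sigmaUpTo (X i) k]) ω ≤ 4 * cf * a * gam cγ β k :=
  smoothed_sgd_conditional_variance_bound_general cγ β a cf hcγ ha hcf Ω μ X F f y Y hXmeas hindep
    hident hcdf hdens hfbd hY1 hYrec i k hk τ
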